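/- arXiv:2603.05401 — 4 statements merged into one kernel-verified Lean document; each statement's English description precedes it below -/
import Mathlib

section
/- The unique critical point of the circular Poiseuille function U^P on (R₁,R₂) is R₀ = sqrt((R₂²−R₁²)/(2 log(R₂/R₁))), and it satisfies R₁ < R₀ < (R₁+R₂)/2. -/
/-!
Since `UP' ρ = (2ρ - C/ρ)/4` with `C = (R₂² - R₁²)/log(R₂/R₁)`, the only positive critical point
is `√(C/2)`. Its square `(R₂² - R₁²)/(2 log(R₂/R₁))` is the logarithmic mean of `R₁²` and `R₂²`,
which exceeds `R₁²` by `log s < s - 1` and is below `((R₁ + R₂)/2)²` by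
`2(t - 1)/(t + 1) < log t` for `t = R₂/R₁ > 1`.
-/

open Real Set

lemma two_mul_sub_one_div_add_one_lt_log {t : ℝ} (ht : 1 < t) :
    2 * (t - 1) / (t + 1) < log t := by
  set x := (t - 1) / (t + 1) with hx
  have hx₀ : 0 < x := div_pos (by linarith) (by linarith)
  have hx₁ : x < 1 := (div_lt_one (by linarith)).2 (by linarith)
  have hratio : (1 + x) / (1 - x) = t := by
    rw [hx]
    field_simp
    ring
  -- the first two terms of the series of `artanh x = ½ log ((1 + x)/(1 - x)) = ½ log t`
  have hseries := sum_range_le_log_div hx₀.le hx₁ 2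
  norm_num [Finset.sum_range_succ, hratio] at hseries
  have hlhs : 2 * (t - 1) / (t + 1) = 2 * x := by rw [hx, mul_div_assoc]
  nlinarith [pow_pos hx₀ 3]

lemma sq_lt_sub_sq_div_two_log_div {a b : ℝ} (ha : 0 < a) (hab : a < b) :
    a ^ 2 < (b ^ 2 - a ^ 2) / (2 * log (b / a)) := by
  have hba : 1 < b / a := (one_lt_div ha).2 hab
  rw [lt_div_iff₀ (by have := log_pos hba; positivity)]
  have hlog := log_lt_sub_one_of_pos (by positivity) hba.ne'
  have hscale : a ^ 2 * (b / a - 1) = a * (b - a) := by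
    field_simp
  nlinarith [mul_lt_mul_of_pos_left hlog (pow_pos ha 2)]

lemma sub_sq_div_two_log_div_lt_sq_add_div_two {a b : ℝ} (ha : 0 < a) (hab : a < b) :
    (b ^ 2 - a ^ 2) / (2 * log (b / a)) < ((a + b) / 2) ^ 2 := by
  have hba : 1 < b / a := (one_lt_div ha).2 hab
  rw [div_lt_iff₀ (by have := log_pos hba; positivity)]
  have hlog := two_mul_sub_one_div_add_one_lt_log hba
  have hratio : 2 * (b / a - 1) / (b / a + 1) = 2 * (b - a) / (a + b) := by
    field_simp
    ring
  rw [hratio, div_lt_iff₀ (by linarith)] at hlog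
  nlinarith [mul_lt_mul_of_pos_left hlog (show 0 < (a + b) / 2 by linarith)]

lemma deriv_poiseuille {R₁ : ℝ} (C : ℝ) (hR₁ : R₁ ≠ 0) {ρ : ℝ} (hρ : ρ ≠ 0) :
    deriv (fun ρ ↦ 1 / 4 * (ρ ^ 2 - R₁ ^ 2 - C * log (ρ / R₁))) ρ = 1 / 4 * (2 * ρ - C / ρ) := by
  have hlog : HasDerivAt (fun ρ ↦ log (ρ / R₁)) (1 / R₁ / (ρ / R₁)) ρ :=
    ((hasDerivAt_id ρ).div_const R₁).log (div_ne_zero hρ hR₁)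
  refine ((((hasDerivAt_pow 2 ρ).sub_const (R₁ ^ 2)).sub (hlog.const_mul C)).const_mul
    (1 / 4)).deriv.trans ?_
  field_simp
  ring

lemma two_mul_sub_div_eq_zero_iff {C ρ : ℝ} (hρ : 0 < ρ) : 2 * ρ - C / ρ = 0 ↔ ρ = √(C / 2) := by
  rw [eq_comm (a := ρ), sqrt_eq_iff_mul_self_eq_of_pos hρ, sub_eq_zero, eq_div_iff hρ.ne']
  constructor <;> intro h <;> linarith

theorem poiseuille_critical_point (R₁ R₂ : ℝ) (hR₁ : 0 < R₁) (hR : R₁ < R₂)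
    (UP : ℝ → ℝ)
    (hUP : ∀ ρ, UP ρ =
      1 / 4 * (ρ ^ 2 - R₁ ^ 2 - (R₂ ^ 2 - R₁ ^ 2) / Real.log (R₂ / R₁) * Real.log (ρ / R₁)))
    (R₀ : ℝ)
    (hR₀ : R₀ = Real.sqrt ((R₂ ^ 2 - R₁ ^ 2) / (2 * Real.log (R₂ / R₁)))) :
    R₀ ∈ Ioo R₁ R₂ ∧ deriv UP R₀ = 0 ∧
    (∀ ρ ∈ Ioo R₁ R₂, deriv UP ρ = 0 → ρ = R₀) ∧
    R₁ < R₀ ∧ R₀ < (R₁ + R₂) / 2 := by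
  have hR₁R₀ : R₁ < R₀ := hR₀ ▸ (lt_sqrt hR₁.le).2 (sq_lt_sub_sq_div_two_log_div hR₁ hR)
  have hR₀mid : R₀ < (R₁ + R₂) / 2 :=
    hR₀ ▸ (sqrt_lt' (by linarith)).2 (sub_sq_div_two_log_div_lt_sq_add_div_two hR₁ hR)
  have hR₀C : R₀ = √((R₂ ^ 2 - R₁ ^ 2) / log (R₂ / R₁) / 2) := by rw [hR₀, div_div, mul_comm]
  have hcrit : ∀ ρ, 0 < ρ → (deriv UP ρ = 0 ↔ ρ = R₀) := by
    intro ρ hρ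
    rw [funext hUP, deriv_poiseuille _ hR₁.ne' hρ.ne', hR₀C, ← two_mul_sub_div_eq_zero_iff hρ]
    simp
  refine ⟨⟨hR₁R₀, by linarith⟩, (hcrit R₀ (by linarith)).2 rfl,
    fun ρ hρ ↦ (hcrit ρ (hR₁.trans hρ.1)).1, hR₁R₀, hR₀mid⟩
end

section
/- For every ρ ∈ [R₁,R₂], the quantity Υ(ρ) = sqrt(α²·R₁²R₂⁴/((R₂²−R₁²)²ρ⁴) + (β²/16)·(ρ − (R₂²−R₁²)/(ρ·log(R₂²/R₁²)))²) satisfies Υ(ρ) ≤ Υ(R₁). -/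
open Real Set

lemma two_log_le_aux (x : ℝ) (hx : 1 ≤ x) : 2 * Real.log x ≤ x - x⁻¹ := by
  have hd : ∀ y : ℝ, 0 < y → HasDerivAt (fun y : ℝ => y - y⁻¹ - 2 * Real.log y)
      (1 - (-(y ^ 2)⁻¹) - 2 * y⁻¹) y := by
    intro y hy0
    have h1 : HasDerivAt (fun y : ℝ => y) 1 y := hasDerivAt_id y
    have h2 : HasDerivAt (fun y : ℝ => y⁻¹) (-(y ^ 2)⁻¹) y := hasDerivAt_inv hy0.ne'
    have h3 : HasDerivAt Real.log y⁻¹ y := Real.hasDerivAt_log hy0.ne'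
    exact (h1.sub h2).sub (h3.const_mul 2)
  have key : MonotoneOn (fun y : ℝ => y - y⁻¹ - 2 * Real.log y) (Set.Ici 1) := by
    have hcont : ContinuousOn (fun y : ℝ => y - y⁻¹ - 2 * Real.log y) (Set.Ici 1) := by
      intro y hy
      have hy0 : (0:ℝ) < y := lt_of_lt_of_le one_pos hy
      exact (hd y hy0).continuousAt.continuousWithinAt
    apply monotoneOn_of_deriv_nonneg (convex_Ici 1) hcont
    · intro y hy
      rw [interior_Ici] at hy
      have hy0 : (0:ℝ) < y := lt_trans one_pos hy
      exact (hd y hy0).differentiableAt.differentiableWithinAt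
    · intro y hy
      rw [interior_Ici] at hy
      have hy0 : (0:ℝ) < y := lt_trans one_pos hy
      rw [(hd y hy0).deriv]
      have h5 : y⁻¹ * y = 1 := inv_mul_cancel₀ hy0.ne'
      have h6 : (y ^ 2)⁻¹ = y⁻¹ * y⁻¹ := by rw [sq, mul_inv]
      nlinarith [sq_nonneg (1 - y⁻¹)]
  have h0 := key (Set.self_mem_Ici) (Set.mem_Ici.mpr hx) hx
  simp only [Real.log_one, inv_one] at h0
  linarith

theorem upsilon_max_at_R₁ (R₁ R₂ α β : ℝ) (hR₁ : 0 < R₁) (hR : R₁ < R₂)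
    (Υ : ℝ → ℝ)
    (hΥ : ∀ ρ, Υ ρ = Real.sqrt
      (α ^ 2 * (R₁ ^ 2 * R₂ ^ 4) / ((R₂ ^ 2 - R₁ ^ 2) ^ 2 * ρ ^ 4) +
        β ^ 2 / 16 * (ρ - (R₂ ^ 2 - R₁ ^ 2) / (ρ * Real.log (R₂ ^ 2 / R₁ ^ 2))) ^ 2)) :
    ∀ ρ ∈ Icc R₁ R₂, Υ ρ ≤ Υ R₁ := by
  intro ρ hρ
  obtain ⟨h1, h2⟩ := hρ
  have hρ0 : 0 < ρ := lt_of_lt_of_le hR₁ h1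
  have hR₂0 : 0 < R₂ := hR₁.trans hR
  have hdiff : 0 < R₂ ^ 2 - R₁ ^ 2 := by nlinarith
  have hL : 0 < Real.log (R₂ ^ 2 / R₁ ^ 2) := by
    apply Real.log_pos
    rw [one_lt_div (by positivity)]
    nlinarith
  set L := Real.log (R₂ ^ 2 / R₁ ^ 2) with hLdef
  set K := (R₂ ^ 2 - R₁ ^ 2) / L with hKdef
  have hK : R₁ * R₂ ≤ K := by
    have hx : (1:ℝ) ≤ R₂ / R₁ := by rw [le_div_iff₀ hR₁]; linarith
    have h2l := two_log_le_aux (R₂ / R₁) hx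
    have hLe : L = 2 * Real.log (R₂ / R₁) := by
      rw [hLdef, ← div_pow, Real.log_pow]
      push_cast; ring
    have hrhs : R₂ / R₁ - (R₂ / R₁)⁻¹ = (R₂ ^ 2 - R₁ ^ 2) / (R₁ * R₂) := by
      field_simp
    rw [hrhs] at h2l
    have hL' : L ≤ (R₂ ^ 2 - R₁ ^ 2) / (R₁ * R₂) := by rw [hLe]; exact h2l
    have h3 := (le_div_iff₀ (by positivity : (0:ℝ) < R₁ * R₂)).mp hL'
    rw [hKdef, le_div_iff₀ hL]
    nlinarith
  have hKρ : R₁ * ρ ≤ K := le_trans (by nlinarith) hK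
  rw [hΥ ρ, hΥ R₁]
  apply Real.sqrt_le_sqrt
  have eρ : (R₂ ^ 2 - R₁ ^ 2) / (ρ * L) = K / ρ := by
    rw [hKdef, div_div, mul_comm]
  have eR : (R₂ ^ 2 - R₁ ^ 2) / (R₁ * L) = K / R₁ := by
    rw [hKdef, div_div, mul_comm]
  rw [eρ, eR]
  have term1 : α ^ 2 * (R₁ ^ 2 * R₂ ^ 4) / ((R₂ ^ 2 - R₁ ^ 2) ^ 2 * ρ ^ 4) ≤
      α ^ 2 * (R₁ ^ 2 * R₂ ^ 4) / ((R₂ ^ 2 - R₁ ^ 2) ^ 2 * R₁ ^ 4) := by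
    have h4 : R₁ ^ 4 ≤ ρ ^ 4 := pow_le_pow_left₀ hR₁.le h1 4
    gcongr
  have term2 : β ^ 2 / 16 * (ρ - K / ρ) ^ 2 ≤ β ^ 2 / 16 * (R₁ - K / R₁) ^ 2 := by
    have h' : R₁ ^ 2 * (ρ ^ 2 - K) ^ 2 ≤ ρ ^ 2 * (R₁ ^ 2 - K) ^ 2 := by
      nlinarith [mul_nonneg (mul_nonneg (sub_nonneg.2 h1) (by positivity : (0:ℝ) ≤ R₁ * ρ + K))
        (mul_nonneg (by positivity : (0:ℝ) ≤ ρ + R₁) (sub_nonneg.2 hKρ))]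
    have e1 : ρ - K / ρ = (ρ ^ 2 - K) / ρ := by field_simp
    have e2 : R₁ - K / R₁ = (R₁ ^ 2 - K) / R₁ := by field_simp
    rw [e1, e2, div_pow, div_pow]
    have q : (ρ ^ 2 - K) ^ 2 / ρ ^ 2 ≤ (R₁ ^ 2 - K) ^ 2 / R₁ ^ 2 := by
      rw [div_le_div_iff₀ (by positivity) (by positivity)]
      nlinarith
    exact mul_le_mul_of_nonneg_left q (by positivity)
  linarith
end

section
/- For a function v : [R₁,R₂] → ℝ (continuously differentiable) with v(R₁) = v(R₂) = 0, one has for every ρ ∈ [R₁,R₂]: |v(ρ)|² ≤ (log(R₂/R₁)/4)·∫_{R₁}^{R₂} |v'(r)|² r dr. -/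
/-!
By the fundamental theorem of calculus, `v ρ` is the integral of `v'` over `[R₁, ρ]` and minus
its integral over `[ρ, R₂]`. Cauchy–Schwarz with the weights `r` and `1 / r` bounds `v ρ ^ 2` by
`L₁ I₁` and by `L₂ I₂`, where `L₁ = log (ρ / R₁)`, `L₂ = log (R₂ / ρ)` and `I₁`, `I₂` are the
weighted energies `∫ v' ^ 2 r` of the two pieces. The best convex combination of the two bounds
is `v ρ ^ 2 ≤ L₁ L₂ / (L₁ + L₂) · (I₁ + I₂) ≤ (L₁ + L₂) / 4 · (I₁ + I₂)`, and
`L₁ + L₂ = log (R₂ / R₁)`.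
-/

open Real Set intervalIntegral
open MeasureTheory (volume)

theorem sq_integral_le_log_div_mul_integral_sq_mul {g : ℝ → ℝ} {a b : ℝ}
    (ha : 0 < a) (hab : a ≤ b) (hg : IntervalIntegrable g volume a b)
    (hg₂ : IntervalIntegrable (fun r ↦ g r ^ 2 * r) volume a b) :
    (∫ r in a..b, g r) ^ 2 ≤ Real.log (b / a) * ∫ r in a..b, g r ^ 2 * r := by
  have hpos : ∀ r ∈ uIcc a b, 0 < r := fun r hr ↦ ha.trans_le (by simpa [hab] using hr.1)
  have hinv : IntervalIntegrable (fun r : ℝ ↦ r⁻¹) volume a b :=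
    intervalIntegrable_inv_iff.2 (Or.inr fun h ↦ (hpos 0 h).false)
  -- `(g r * r - t) ^ 2 / r = g r ^ 2 * r - 2 t g r + t ^ 2 / r` is a nonnegative quadratic in `t`.
  have hquad : ∀ t : ℝ, 0 ≤ Real.log (b / a) * (t * t) + -2 * (∫ r in a..b, g r) * t
      + ∫ r in a..b, g r ^ 2 * r := by
    intro t
    have hexpand : ∫ r in a..b, (g r * r - t) ^ 2 / r
        = ∫ r in a..b, (g r ^ 2 * r - 2 * t * g r + t ^ 2 * r⁻¹) := by
      refine integral_congr fun r hr ↦ ?_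
      field_simp [(hpos r hr).ne']
      ring
    have hnonneg : 0 ≤ ∫ r in a..b, (g r * r - t) ^ 2 / r :=
      integral_nonneg hab fun r hr ↦
        div_nonneg (sq_nonneg _) (hpos r (Icc_subset_uIcc hr)).le
    rw [hexpand, integral_add (hg₂.sub (hg.const_mul _)) (hinv.const_mul _),
      integral_sub hg₂ (hg.const_mul _), integral_const_mul, integral_const_mul,
      integral_inv_of_pos ha (ha.trans_le hab)] at hnonneg
    linarith
  have hdiscrim := discrim_le_zero hquad
  rw [discrim] at hdiscrim
  linarith

theorem ContDiffOn.sq_sub_le_log_div_mul_integral_deriv_sq_mul {v : ℝ → ℝ} {a b : ℝ}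
    (hv : ContDiffOn ℝ 1 v (Icc a b)) (ha : 0 < a) (hab : a ≤ b) :
    (v b - v a) ^ 2 ≤ Real.log (b / a) * ∫ r in a..b, deriv v r ^ 2 * r := by
  rcases hab.eq_or_lt with rfl | hlt
  · simp
  have hg : ContinuousOn (derivWithin v (Icc a b)) (Icc a b) :=
    hv.continuousOn_derivWithin (uniqueDiffOn_Icc hlt) le_rfl
  have hderiv : EqOn (fun r ↦ deriv v r ^ 2 * r) (fun r ↦ derivWithin v (Icc a b) r ^ 2 * r)
      (uIoo a b) := fun r hr ↦ by
    rw [uIoo_of_le hab] at hr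
    simp only [derivWithin_of_mem_nhds (Icc_mem_nhds hr.1 hr.2)]
  rw [integral_congr_uIoo hderiv, ← integral_derivWithin_Icc_of_contDiffOn_Icc hv hab]
  exact sq_integral_le_log_div_mul_integral_sq_mul ha hab (hg.intervalIntegrable_of_Icc hab)
    (((hg.pow 2).mul continuousOn_id).intervalIntegrable_of_Icc hab)

theorem ContDiffOn.intervalIntegrable_deriv_sq_mul {v : ℝ → ℝ} {a b : ℝ}
    (hv : ContDiffOn ℝ 1 v (Icc a b)) (hab : a ≤ b) :
    IntervalIntegrable (fun r ↦ deriv v r ^ 2 * r) volume a b := by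
  rcases hab.eq_or_lt with rfl | hlt
  · exact IntervalIntegrable.refl
  have hg : ContinuousOn (derivWithin v (Icc a b)) (Icc a b) :=
    hv.continuousOn_derivWithin (uniqueDiffOn_Icc hlt) le_rfl
  refine (intervalIntegrable_congr_uIoo fun r hr ↦ ?_).2
    (((hg.pow 2).mul continuousOn_id).intervalIntegrable_of_Icc hab)
  rw [uIoo_of_le hab] at hr
  simp [derivWithin_of_mem_nhds (Icc_mem_nhds hr.1 hr.2)]

theorem le_add_div_four_mul_add_of_le_mul_of_le_mul {x a b I J : ℝ} (ha : 0 ≤ a) (hb : 0 ≤ b)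
    (hI : 0 ≤ I) (hJ : 0 ≤ J) (h₁ : x ≤ a * I) (h₂ : x ≤ b * J) :
    x ≤ (a + b) / 4 * (I + J) := by
  rcases le_or_gt x 0 with hx | hx
  · exact hx.trans (by positivity)
  have hab : 0 < a + b := by
    by_contra! h
    nlinarith
  have hmean : (a + b) * x ≤ a * b * (I + J) := by nlinarith
  have hamgm : a * b ≤ (a + b) ^ 2 / 4 := by nlinarith [sq_nonneg (a - b)]
  nlinarith [mul_le_mul_of_nonneg_right hamgm (add_nonneg hI hJ)]

theorem pointwise_bound_1d_general (R₁ R₂ : ℝ) (hR₁ : 0 < R₁)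
    (v : ℝ → ℝ) (hv : ContDiffOn ℝ 1 v (Icc R₁ R₂))
    (hv₁ : v R₁ = 0) (hv₂ : v R₂ = 0) :
    ∀ ρ ∈ Icc R₁ R₂,
      (v ρ) ^ 2 ≤ Real.log (R₂ / R₁) / 4 * ∫ r in R₁..R₂, (deriv v r) ^ 2 * r := by
  rintro ρ ⟨hR₁ρ, hρR₂⟩
  have hρ : 0 < ρ := hR₁.trans_le hR₁ρ
  have hv_left : ContDiffOn ℝ 1 v (Icc R₁ ρ) := hv.mono (Icc_subset_Icc le_rfl hρR₂)
  have hv_right : ContDiffOn ℝ 1 v (Icc ρ R₂) := hv.mono (Icc_subset_Icc hR₁ρ le_rfl)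
  have h_left := hv_left.sq_sub_le_log_div_mul_integral_deriv_sq_mul hR₁ hR₁ρ
  have h_right := hv_right.sq_sub_le_log_div_mul_integral_deriv_sq_mul hρ hρR₂
  rw [hv₁, sub_zero] at h_left
  rw [hv₂, zero_sub, neg_sq] at h_right
  have hlog : Real.log (R₂ / R₁) = Real.log (ρ / R₁) + Real.log (R₂ / ρ) := by
    rw [← Real.log_mul (div_pos hρ hR₁).ne' (div_pos (hρ.trans_le hρR₂) hρ).ne',
      div_mul_div_cancel₀' hρ.ne']
  rw [hlog, ← integral_add_adjacent_intervals (hv_left.intervalIntegrable_deriv_sq_mul hR₁ρ)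
    (hv_right.intervalIntegrable_deriv_sq_mul hρR₂)]
  refine le_add_div_four_mul_add_of_le_mul_of_le_mul
    (Real.log_nonneg ((one_le_div hR₁).2 hR₁ρ)) (Real.log_nonneg ((one_le_div hρ).2 hρR₂))
    ?_ ?_ h_left h_right
  · exact integral_nonneg hR₁ρ fun r hr ↦
      mul_nonneg (sq_nonneg _) (hR₁.trans_le hr.1).le
  · exact integral_nonneg hρR₂ fun r hr ↦
      mul_nonneg (sq_nonneg _) (hρ.trans_le hr.1).le

theorem pointwise_bound_1d (R₁ R₂ : ℝ) (hR₁ : 0 < R₁) (hR : R₁ < R₂)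
    (v : ℝ → ℝ) (hv : ContDiffOn ℝ 1 v (Icc R₁ R₂))
    (hv₁ : v R₁ = 0) (hv₂ : v R₂ = 0) :
    ∀ ρ ∈ Icc R₁ R₂,
      (v ρ) ^ 2 ≤ Real.log (R₂ / R₁) / 4 * ∫ r in R₁..R₂, (deriv v r) ^ 2 * r :=
  pointwise_bound_1d_general R₁ R₂ hR₁ v hv hv₁ hv₂
end

section
/- For each k ∈ ℤ \ {0}, the singular Sturm–Liouville problem (ρ W')' − (k²/ρ) W = −λ·(kR₁/(R₂²−R₁²))·(ρ − R₂²/ρ)·W on (R₁,R₂) with W(R₁) = W(R₂) = 0 admits no purely imaginary eigenvalue λ (and λ = 0 is not an eigenvalue). -/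
/-!
Multiply the equation by `W̄` and take real parts: `g ρ = Re (W̄ ρ · ρ W' ρ)` satisfies
`g' = ρ |W'|² + (k²/ρ) |W|² + Re (-λ c(ρ)) |W|²` with `c(ρ)` real, and the last term vanishes
because `λ` is purely imaginary. So `g` is nondecreasing, and it vanishes at both endpoints by the
boundary conditions; hence `g' ≡ 0`, which forces `(k²/ρ) |W ρ|² = 0`.
-/

open Real Set Complex Filter Topology ComplexConjugate

theorem eq_zero_of_hasDerivAt_of_nonneg_of_eq {f f' : ℝ → ℝ} {a b : ℝ}
    (hf : ContinuousOn f (Icc a b)) (hderiv : ∀ x ∈ Ioo a b, HasDerivAt f (f' x) x)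
    (hnonneg : ∀ x ∈ Ioo a b, 0 ≤ f' x) (hab : f a = f b) :
    ∀ x ∈ Ioo a b, f' x = 0 := by
  have hmono : MonotoneOn f (Icc a b) :=
    monotoneOn_of_hasDerivWithinAt_nonneg (convex_Icc a b) hf
      (fun x hx ↦ (hderiv x (by rwa [← interior_Icc])).hasDerivWithinAt)
      (fun x hx ↦ hnonneg x (by rwa [← interior_Icc]))
  have hconst : ∀ y ∈ Icc a b, f y = f a := fun y hy ↦ by
    have hle : a ≤ b := hy.1.trans hy.2
    have h₁ := hmono (left_mem_Icc.2 hle) hy hy.1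
    have h₂ := hmono hy (right_mem_Icc.2 hle) hy.2
    linarith
  intro x hx
  have hloc : f =ᶠ[𝓝 x] fun _ ↦ f a := by
    filter_upwards [Icc_mem_nhds hx.1 hx.2] with y hy using hconst y hy
  exact (hderiv x hx).unique ((hasDerivAt_const x (f a)).congr_of_eventuallyEq hloc)

theorem hasDerivAt_re_conj_mul_flux {W W' : ℝ → ℂ} {D : ℂ} {ρ : ℝ}
    (hW : HasDerivAt W (W' ρ) ρ) (hflux : HasDerivAt (fun r : ℝ ↦ (r : ℂ) * W' r) D ρ) :
    HasDerivAt (fun r ↦ (conj (W r) * (r * W' r)).re)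
      (ρ * normSq (W' ρ) + (conj (W ρ) * D).re) ρ := by
  refine (reCLM.hasFDerivAt.comp_hasDerivAt ρ (hW.star.mul hflux)).congr_deriv ?_
  rw [reCLM_apply, RCLike.star_def, add_re, mul_left_comm, re_ofReal_mul,
    ← normSq_eq_conj_mul_self, ofReal_re]

theorem re_conj_mul_eq_of_re_eq_zero {w d μ : ℂ} {a : ℝ} (hμ : μ.re = 0)
    (hd : d = a * w + μ * w) : (conj w * d).re = a * normSq w := by
  rw [hd, mul_add, mul_left_comm, mul_left_comm _ μ, ← normSq_eq_conj_mul_self, ← ofReal_mul,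
    add_re, ofReal_re, re_mul_ofReal, hμ, zero_mul, add_zero, mul_comm]

/-- `Re (W̄ · r W')`, with the derivative taken within `s` so that on `s = Icc a b` it is
continuous up to the endpoints for `C¹` functions. -/
noncomputable def fluxPairing (W : ℝ → ℂ) (s : Set ℝ) (r : ℝ) : ℝ :=
  (conj (W r) * (r * derivWithin W s r)).re

theorem continuousOn_fluxPairing {W : ℝ → ℂ} {a b : ℝ} (hab : a < b)
    (hW : ContDiffOn ℝ 1 W (Icc a b)) : ContinuousOn (fluxPairing W (Icc a b)) (Icc a b) := by
  have hW' := hW.continuousOn_derivWithin (uniqueDiffOn_Icc hab) le_rfl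
  exact continuous_re.comp_continuousOn <|
    (continuous_conj.comp_continuousOn hW.continuousOn).mul
      (continuous_ofReal.continuousOn.mul hW')

theorem hasDerivAt_fluxPairing {W : ℝ → ℂ} {a b x : ℝ} (hW : ContDiffOn ℝ 2 W (Icc a b))
    (hx : x ∈ Ioo a b) :
    HasDerivAt (fluxPairing W (Icc a b))
      (x * normSq (deriv W x) + (conj (W x) * deriv (fun r : ℝ ↦ (r : ℂ) * deriv W r) x).re) x := by
  have hC2 : ContDiffAt ℝ 2 W x := hW.contDiffAt (Icc_mem_nhds hx.1 hx.2)
  have hW' : derivWithin W (Icc a b) =ᶠ[𝓝 x] deriv W := by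
    filter_upwards [isOpen_Ioo.mem_nhds hx] with r hr
    exact derivWithin_of_mem_nhds (Icc_mem_nhds hr.1 hr.2)
  have hWx : HasDerivAt W (derivWithin W (Icc a b) x) x := by
    rw [hW'.eq_of_nhds]
    exact (hC2.differentiableAt two_ne_zero).hasDerivAt
  have hflux : HasDerivAt (fun r : ℝ ↦ (r : ℂ) * derivWithin W (Icc a b) r)
      (deriv (fun r : ℝ ↦ (r : ℂ) * deriv W r) x) x := by
    refine DifferentiableAt.hasDerivAt ?_ |>.congr_of_eventuallyEq ?_
    · exact ofRealCLM.differentiableAt.mul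
        ((hC2.derivWithin (m := 1) (by norm_num)).differentiableAt one_ne_zero)
    · filter_upwards [hW'] with r hr
      rw [hr]
  rw [← hW'.eq_of_nhds]
  exact hasDerivAt_re_conj_mul_flux hWx hflux

theorem sturm_liouville_no_imaginary_eigenvalue
    (R₁ R₂ : ℝ) (hR₁ : 0 < R₁) (hR : R₁ < R₂)
    (k : ℤ) (hk : k ≠ 0) (lam : ℂ) (hlam : lam.re = 0)
    (W : ℝ → ℂ) (hW : ContDiffOn ℝ 2 W (Icc R₁ R₂))
    (hode : ∀ ρ ∈ Ioo R₁ R₂,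
      deriv (fun r : ℝ => (r : ℂ) * deriv W r) ρ - ((k : ℂ) ^ 2 / ρ) * W ρ =
        -lam * ((k : ℂ) * R₁ / ((R₂ : ℂ) ^ 2 - (R₁ : ℂ) ^ 2)) *
          ((ρ : ℂ) - (R₂ : ℂ) ^ 2 / (ρ : ℂ)) * W ρ)
    (hb₁ : W R₁ = 0) (hb₂ : W R₂ = 0) :
    ∀ ρ ∈ Icc R₁ R₂, W ρ = 0 := by
  set g' : ℝ → ℝ := fun r ↦ r * normSq (deriv W r) + (k : ℝ) ^ 2 / r * normSq (W r)
  have hderiv : ∀ ρ ∈ Ioo R₁ R₂, HasDerivAt (fluxPairing W (Icc R₁ R₂)) (g' ρ) ρ := by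
    intro ρ hρ
    refine (hasDerivAt_fluxPairing hW hρ).congr_deriv ?_
    have hμ : (-lam * ((k : ℂ) * R₁ / ((R₂ : ℂ) ^ 2 - (R₁ : ℂ) ^ 2)) *
        ((ρ : ℂ) - (R₂ : ℂ) ^ 2 / (ρ : ℂ))).re = 0 := by
      have hreal : ((k : ℂ) * R₁ / ((R₂ : ℂ) ^ 2 - (R₁ : ℂ) ^ 2)) * ((ρ : ℂ) - (R₂ : ℂ) ^ 2 / ρ) =
          ((k * R₁ / (R₂ ^ 2 - R₁ ^ 2) * (ρ - R₂ ^ 2 / ρ) : ℝ) : ℂ) := by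
        push_cast
        ring
      rw [mul_assoc, hreal, re_mul_ofReal, neg_re, hlam, neg_zero, zero_mul]
    rw [re_conj_mul_eq_of_re_eq_zero (a := (k : ℝ) ^ 2 / ρ) hμ
      (by push_cast; linear_combination hode ρ hρ)]
  have hnonneg : ∀ ρ ∈ Ioo R₁ R₂, 0 ≤ g' ρ := fun ρ hρ ↦ by
    have hρ₀ : 0 < ρ := hR₁.trans hρ.1
    exact add_nonneg (mul_nonneg (by positivity) (normSq_nonneg _))
      (mul_nonneg (by positivity) (normSq_nonneg _))
  have hg'_zero := eq_zero_of_hasDerivAt_of_nonneg_of_eq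
    (continuousOn_fluxPairing hR (hW.of_le one_le_two)) hderiv hnonneg
    (by simp [fluxPairing, hb₁, hb₂])
  intro ρ hρ
  rcases eq_endpoints_or_mem_Ioo_of_mem_Icc hρ with rfl | rfl | hρ
  · exact hb₁
  · exact hb₂
  have hρ₀ : 0 < ρ := hR₁.trans hρ.1
  have hk₀ : 0 < (k : ℝ) ^ 2 / ρ := by positivity
  have h := (add_eq_zero_iff_of_nonneg (mul_nonneg hρ₀.le (normSq_nonneg _))
    (mul_nonneg hk₀.le (normSq_nonneg _))).1 (hg'_zero ρ hρ)
  exact normSq_eq_zero.1 ((mul_eq_zero.1 h.2).resolve_left hk₀.ne')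
end
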